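/- arXiv:2303.14359 — 2 statements merged into one kernel-verified Lean document; each statement's English description precedes it below -/
import Mathlib

section
/- Let H be a real Hilbert space, F ⊆ H a closed linear subspace, e ∈ H with ‖e‖ = 1 such that H = span{e} ⊕ F, and η ∈ (0, 1) such that |⟨u, e⟩| ≤ η‖u‖ for all u ∈ F. Then: (a) whenever ξ = γ·e + u with γ ∈ ℝ, u ∈ F and ‖ξ‖ = 1, one has |γ| ≤ 1/√(1 − η²) and ‖u‖ ≤ 1/√(1 − η²); (b) the set C := {u + γ·e : u ∈ F, γ ≥ 0, ‖u‖ ≤ γ/2} is a closed convex proper cone and, with r := √(1 − η²)/3, the closed ball B(e, r) is contained in C and in the dual cone C′ = {w ∈ H : ⟨w, v⟩ ≥ 0 for all v ∈ C}. -/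
/-!
Every `x` splits uniquely as `x = γ e + u` with `u ∈ F`, and `γ` is a linear form with kernel `F`,
hence continuous since `F` is closed; in these coordinates the cone is the closed set
`‖x - γ(x) e‖ ≤ γ(x)/2`, and properness is `γ(-x) = -γ(x)`. The angle condition makes the
decomposition quantitatively stable, `√(1 - η²) · max(|γ|, ‖u‖) ≤ ‖γ e + u‖`, which yields (a)
and shows that near `e` the coordinates stay close to `(1, 0)`, so `B(e, √(1 - η²)/3) ⊆ C`. The dual inclusion only needs
Cauchy–Schwarz: for `v = u + γ e ∈ C` one has `⟪e, v⟫ ≥ γ/2` and `‖v‖ ≤ 3γ/2`.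
-/

open scoped RealInnerProductSpace

noncomputable section

variable {H : Type*}

/-- The dual cone `C' = {w : ⟪w, v⟫ ≥ 0 for all v ∈ C}`. -/
def dualCone [NormedAddCommGroup H] [InnerProductSpace ℝ H] (C : Set H) : Set H :=
  {w : H | ∀ v ∈ C, 0 ≤ ⟪w, v⟫}

open Submodule Metric

section Coefficient

variable {𝕜 E : Type*} [Field 𝕜] [AddCommGroup E] [Module 𝕜 E] {F : Submodule 𝕜 E} {e : E}

/-- The `e`-coordinate `γ` of `x = γ • e + u` in the decomposition `E = 𝕜 ∙ e ⊕ F`. -/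
def spanCoeff (he : e ≠ 0) (hcompl : IsCompl (𝕜 ∙ e) F) : E →ₗ[𝕜] 𝕜 :=
  (LinearEquiv.coord 𝕜 E e he).toLinearMap ∘ₗ (𝕜 ∙ e).projectionOnto F hcompl

variable (he : e ≠ 0) (hcompl : IsCompl (𝕜 ∙ e) F)

theorem ker_spanCoeff : LinearMap.ker (spanCoeff he hcompl) = F := by
  rw [spanCoeff, LinearEquiv.ker_comp, ker_projectionOnto]

theorem spanCoeff_eq_zero_iff {x : E} : spanCoeff he hcompl x = 0 ↔ x ∈ F := by
  rw [← LinearMap.mem_ker, ker_spanCoeff]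

theorem spanCoeff_self : spanCoeff he hcompl e = 1 := by
  rw [spanCoeff, LinearMap.comp_apply,
    projectionOnto_apply_of_mem_left hcompl (mem_span_singleton_self e)]
  exact LinearEquiv.coord_self 𝕜 E e he

theorem spanCoeff_add_smul {u : E} (hu : u ∈ F) (γ : 𝕜) :
    spanCoeff he hcompl (u + γ • e) = γ := by
  rw [← spanCoeff_eq_zero_iff he hcompl] at hu
  rw [map_add, map_smul, hu, spanCoeff_self, smul_eq_mul, mul_one, zero_add]

theorem sub_spanCoeff_smul_mem (x : E) : x - spanCoeff he hcompl x • e ∈ F := by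
  rw [← spanCoeff_eq_zero_iff he hcompl, map_sub, map_smul, spanCoeff_self,
    smul_eq_mul, mul_one, sub_self]

end Coefficient

section Cone

variable {E : Type*} [NormedAddCommGroup E] [NormedSpace ℝ E] {F : Submodule ℝ E} {e : E}

def graphCone (F : Submodule ℝ E) (e : E) : Set E :=
  {x | ∃ u ∈ F, ∃ γ : ℝ, 0 ≤ γ ∧ ‖u‖ ≤ γ / 2 ∧ x = u + γ • e}

theorem mem_graphCone_iff (he : e ≠ 0) (hcompl : IsCompl (ℝ ∙ e) F) {x : E} :
    x ∈ graphCone F e ↔ ‖x - spanCoeff he hcompl x • e‖ ≤ spanCoeff he hcompl x / 2 := by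
  constructor
  · rintro ⟨u, hu, γ, -, huγ, rfl⟩
    rwa [spanCoeff_add_smul he hcompl hu, add_sub_cancel_right]
  · intro hx
    refine ⟨_, sub_spanCoeff_smul_mem he hcompl x, _, ?_, hx, (sub_add_cancel _ _).symm⟩
    linarith [norm_nonneg (x - spanCoeff he hcompl x • e)]

theorem isClosed_graphCone (he : e ≠ 0) (hcompl : IsCompl (ℝ ∙ e) F)
    (hF : IsClosed (F : Set E)) : IsClosed (graphCone F e) := by
  have hcont : Continuous (spanCoeff he hcompl) :=
    LinearMap.continuous_of_isClosed_ker _ (by rwa [ker_spanCoeff])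
  have hset : graphCone F e =
      {x | ‖x - spanCoeff he hcompl x • e‖ ≤ spanCoeff he hcompl x / 2} :=
    Set.ext fun _ ↦ mem_graphCone_iff he hcompl
  rw [hset]
  exact isClosed_le (by fun_prop) (by fun_prop)

theorem convex_graphCone (F : Submodule ℝ E) (e : E) : Convex ℝ (graphCone F e) := by
  rintro _ ⟨u, hu, γ, hγ, huγ, rfl⟩ _ ⟨v, hv, δ, hδ, hvδ, rfl⟩ a b ha hb -
  refine ⟨a • u + b • v, F.add_mem (F.smul_mem a hu) (F.smul_mem b hv),
    a * γ + b * δ, by positivity, ?_, by module⟩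
  calc ‖a • u + b • v‖ ≤ a * ‖u‖ + b * ‖v‖ := by
        simpa [norm_smul, abs_of_nonneg ha, abs_of_nonneg hb] using norm_add_le (a • u) (b • v)
    _ ≤ a * (γ / 2) + b * (δ / 2) := by gcongr
    _ = (a * γ + b * δ) / 2 := by ring

theorem smul_mem_graphCone {t : ℝ} (ht : 0 ≤ t) {x : E} (hx : x ∈ graphCone F e) :
    t • x ∈ graphCone F e := by
  obtain ⟨u, hu, γ, hγ, huγ, rfl⟩ := hx
  refine ⟨t • u, F.smul_mem t hu, t * γ, mul_nonneg ht hγ, ?_, by module⟩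
  rw [norm_smul, Real.norm_of_nonneg ht, mul_div_assoc]
  gcongr

theorem graphCone_inter_neg (he : e ≠ 0) (hcompl : IsCompl (ℝ ∙ e) F) :
    graphCone F e ∩ -graphCone F e = {0} := by
  have h0 : (0 : E) ∈ graphCone F e := ⟨0, F.zero_mem, 0, le_rfl, by simp, by simp⟩
  refine Set.eq_singleton_iff_unique_mem.mpr ⟨⟨h0, by simpa using h0⟩, ?_⟩
  rintro x ⟨hx, hnx⟩
  rw [Set.mem_neg, mem_graphCone_iff he hcompl, map_neg] at hnx
  rw [mem_graphCone_iff he hcompl] at hx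
  have hγ : spanCoeff he hcompl x = 0 := by
    linarith [norm_nonneg (x - spanCoeff he hcompl x • e),
      norm_nonneg (-x - -spanCoeff he hcompl x • e)]
  rw [hγ, zero_smul, sub_zero] at hx
  exact norm_le_zero_iff.mp (by linarith)

end Cone

section InnerProduct

variable [NormedAddCommGroup H] [InnerProductSpace ℝ H] {F : Submodule ℝ H} {e : H} {η : ℝ}

/-- Completing the square: `‖a + b‖² ≥ ‖a‖² - 2η‖a‖‖b‖ + ‖b‖² = (‖b‖ - η‖a‖)² + (1 - η²)‖a‖²`. -/
theorem sqrt_one_sub_sq_mul_norm_le_norm_add {a b : H} (h : |⟪a, b⟫| ≤ η * (‖a‖ * ‖b‖)) :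
    √(1 - η ^ 2) * ‖a‖ ≤ ‖a + b‖ := by
  have hsq : (1 - η ^ 2) * ‖a‖ ^ 2 ≤ ‖a + b‖ ^ 2 := by
    rw [norm_add_sq_real]
    nlinarith [neg_abs_le ⟪a, b⟫, sq_nonneg (‖b‖ - η * ‖a‖)]
  calc √(1 - η ^ 2) * ‖a‖ = √((1 - η ^ 2) * ‖a‖ ^ 2) := by
        rw [Real.sqrt_mul' _ (sq_nonneg _), Real.sqrt_sq (norm_nonneg a)]
    _ ≤ √(‖a + b‖ ^ 2) := Real.sqrt_le_sqrt hsq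
    _ = ‖a + b‖ := Real.sqrt_sq (norm_nonneg _)

theorem sqrt_one_sub_sq_mul_le_norm_smul_add (he : ‖e‖ = 1) {u : H}
    (hu : |⟪u, e⟫| ≤ η * ‖u‖) (γ : ℝ) :
    √(1 - η ^ 2) * |γ| ≤ ‖γ • e + u‖ ∧ √(1 - η ^ 2) * ‖u‖ ≤ ‖γ • e + u‖ := by
  have h : |⟪γ • e, u⟫| ≤ η * (‖γ • e‖ * ‖u‖) := by
    rw [real_inner_smul_left, abs_mul, real_inner_comm, norm_smul, he, Real.norm_eq_abs]
    nlinarith [mul_le_mul_of_nonneg_left hu (abs_nonneg γ)]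
  refine ⟨?_, ?_⟩
  · simpa [norm_smul, he] using sqrt_one_sub_sq_mul_norm_le_norm_add h
  · rw [add_comm]
    rw [real_inner_comm, mul_comm ‖γ • e‖] at h
    exact sqrt_one_sub_sq_mul_norm_le_norm_add h

theorem abs_le_and_norm_le_of_norm_smul_add_eq_one (he : ‖e‖ = 1) (hη : η ^ 2 < 1) {u : H}
    (hu : |⟪u, e⟫| ≤ η * ‖u‖) {γ : ℝ} (hγu : ‖γ • e + u‖ = 1) :
    |γ| ≤ 1 / √(1 - η ^ 2) ∧ ‖u‖ ≤ 1 / √(1 - η ^ 2) := by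
  have hs : 0 < √(1 - η ^ 2) := Real.sqrt_pos.mpr (by linarith)
  obtain ⟨hγ_le, hu_le⟩ := sqrt_one_sub_sq_mul_le_norm_smul_add he hu γ
  rw [hγu] at hγ_le hu_le
  constructor <;> rw [le_div_iff₀ hs] <;> linarith

theorem closedBall_subset_graphCone (he : ‖e‖ = 1) (hcompl : IsCompl (ℝ ∙ e) F)
    (hangle : ∀ u ∈ F, |⟪u, e⟫| ≤ η * ‖u‖) (hη : η ^ 2 < 1) :
    closedBall e (√(1 - η ^ 2) / 3) ⊆ graphCone F e := by
  have he0 : e ≠ 0 := ne_zero_of_norm_ne_zero (he ▸ one_ne_zero)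
  have hs : 0 < √(1 - η ^ 2) := Real.sqrt_pos.mpr (by linarith)
  intro x hx
  rw [mem_closedBall, dist_eq_norm] at hx
  rw [mem_graphCone_iff he0 hcompl]
  set γ := spanCoeff he0 hcompl x
  have hxe : x - e = (γ - 1) • e + (x - γ • e) := by module
  obtain ⟨hγ, hu⟩ := sqrt_one_sub_sq_mul_le_norm_smul_add he
    (hangle _ (sub_spanCoeff_smul_mem he0 hcompl x)) (γ - 1)
  rw [← hxe] at hγ hu
  have hγ' : |γ - 1| ≤ 1 / 3 := by nlinarith
  have hu' : ‖x - γ • e‖ ≤ 1 / 3 := by nlinarith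
  linarith [(abs_le.mp hγ').1]

theorem closedBall_subset_dualCone_graphCone (he : ‖e‖ = 1) {ρ : ℝ} (hρ : ρ ≤ 1 / 3) :
    closedBall e ρ ⊆ dualCone (graphCone F e) := by
  rintro w hw _ ⟨u, -, γ, hγ, huγ, rfl⟩
  rw [mem_closedBall, dist_eq_norm] at hw
  have hev : γ / 2 ≤ ⟪e, u + γ • e⟫ := by
    have hCS := abs_real_inner_le_norm e u
    rw [he, one_mul] at hCS
    rw [inner_add_right, real_inner_smul_right, real_inner_self_eq_norm_sq, he]
    linarith [neg_abs_le ⟪e, u⟫]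
  have hv : ‖u + γ • e‖ ≤ 3 / 2 * γ := by
    have := norm_add_le u (γ • e)
    rw [norm_smul, Real.norm_of_nonneg hγ, he] at this
    linarith
  have hwev : -(γ / 2) ≤ ⟪w - e, u + γ • e⟫ := by
    have : ‖w - e‖ * ‖u + γ • e‖ ≤ 1 / 3 * (3 / 2 * γ) :=
      mul_le_mul (hw.trans hρ) hv (norm_nonneg _) (by norm_num)
    linarith [neg_abs_le ⟪w - e, u + γ • e⟫, abs_real_inner_le_norm (w - e) (u + γ • e)]
  have hsplit := inner_sub_left (𝕜 := ℝ) w e (u + γ • e)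
  linarith

end InnerProduct

/-- Example 3.1(iii): if the angle between `span{e}` and the closed complement `F` is
uniformly separated from zero (`|⟪u, e⟫| ≤ η‖u‖` on `F`), then (a) the components of any
unit vector are bounded by `1/√(1-η²)`, and (b) the cone
`C = {u + γe : u ∈ F, γ ≥ 0, ‖u‖ ≤ γ/2}` is a closed convex proper cone containing
`B(e, √(1-η²)/3)`, which is also contained in the dual cone `C'`. -/
theorem graph_cone_satisfies_condition_C
    [NormedAddCommGroup H] [InnerProductSpace ℝ H]
    (F : Submodule ℝ H) (hF : IsClosed (F : Set H))
    (e : H) (he : ‖e‖ = 1)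
    (hcompl : IsCompl (Submodule.span ℝ {e}) F)
    (η : ℝ) (hη : η ∈ Set.Ioo (0 : ℝ) 1)
    (hangle : ∀ u ∈ F, |⟪u, e⟫| ≤ η * ‖u‖)
    (C : Set H)
    (hC : C = {x : H | ∃ u ∈ F, ∃ γ : ℝ, 0 ≤ γ ∧ ‖u‖ ≤ γ / 2 ∧ x = u + γ • e})
    (r : ℝ) (hr : r = Real.sqrt (1 - η ^ 2) / 3) :
    (∀ γ : ℝ, ∀ u ∈ F, ‖γ • e + u‖ = 1 →
      |γ| ≤ 1 / Real.sqrt (1 - η ^ 2) ∧ ‖u‖ ≤ 1 / Real.sqrt (1 - η ^ 2)) ∧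
    IsClosed C ∧ Convex ℝ C ∧ (∀ t : ℝ, 0 ≤ t → ∀ v ∈ C, t • v ∈ C) ∧
    C ∩ (-C) = {0} ∧
    Metric.closedBall e r ⊆ C ∧
    Metric.closedBall e r ⊆ dualCone C := by
  obtain rfl : C = graphCone F e := hC
  subst hr
  have he0 : e ≠ 0 := ne_zero_of_norm_ne_zero (he ▸ one_ne_zero)
  have hη2 : η ^ 2 < 1 := by nlinarith [hη.1, hη.2]
  have hr : √(1 - η ^ 2) / 3 ≤ 1 / 3 := by
    gcongr
    exact Real.sqrt_le_one.mpr (by nlinarith)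
  exact ⟨fun γ u hu ↦ abs_le_and_norm_le_of_norm_smul_add_eq_one he hη2 (hangle u hu),
    isClosed_graphCone he0 hcompl hF, convex_graphCone F e,
    fun _ ht _ hv ↦ smul_mem_graphCone ht hv, graphCone_inter_neg he0 hcompl,
    closedBall_subset_graphCone he hcompl hangle hη2,
    closedBall_subset_dualCone_graphCone he hr⟩
end
end

section
/- Let (Ω, 𝓕, ℙ) be a probability space, θ : Ω → Ω an invertible measure-preserving transformation, d ≥ 1, and A : Ω → L(ℝ^d, ℝ^d) measurable with M := ess sup_ω ‖A(ω)‖ < ∞; set Φ_A(0, ω) = id and Φ_A(n, ω) = A(θ^{n−1}ω)⋯A(ω). Let E, F : Ω → {linear subspaces of ℝ^d} satisfy, for ℙ-a.e. ω: A(ω)E(ω) ⊆ E(θω), A(ω)F(ω) ⊆ F(θω), and ‖A(ω)v‖ ≥ δ‖v‖ for all v ∈ E(ω), where δ > 0. Then the following are equivalent: (1) there exist K, α > 0 such that for ℙ-a.e. ω, for all n ∈ ℕ, all v ∈ E(ω) \ {0} and all u ∈ F(ω) \ {0}: ‖Φ_A(n, ω)v‖/‖v‖ ≥ K·e^{αn}·‖Φ_A(n,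 ω)u‖/‖u‖; (2) there exist N ∈ ℕ, N ≥ 1, and ρ > 1 such that for ℙ-a.e. ω, for all v ∈ E(ω) \ {0} and all u ∈ F(ω) \ {0}: ‖Φ_A(N, ω)v‖/‖v‖ ≥ ρ·‖Φ_A(N, ω)u‖/‖u‖. -/
/-!
Single-time domination by `ρ` at time `N` composes along the orbit to domination by `ρ ^ q`
at time `N * q`. The remaining `r < N` steps cost at most a factor `(δ / M) ^ r ≥ (δ / M) ^ N`,
since `E` is expanded by at least `δ` and everything by at most `M` per step; and
`ρ ^ q ≥ ρ ^ (n / N) / ρ` gives exponential domination with rate `log ρ / N`. Conversely,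
`K * exp (α * N) ≥ 2` for large `N`. Measure preservation makes the almost-sure hypotheses
hold along almost every whole forward orbit, on which the argument is deterministic.
-/

open MeasureTheory Filter Topology

noncomputable section

variable {Ω : Type*}

/-- The cocycle generated by a random linear map: `Φ_A(0, ω) = id`,
`Φ_A(n+1, ω) = Φ_A(n, θω) ∘ A(ω)`. -/
def cocycle {E : Type*} [NormedAddCommGroup E] [NormedSpace ℝ E] (θ : Ω → Ω)
    (A : Ω → E →L[ℝ] E) : ℕ → Ω → E →L[ℝ] E
  | 0, _ => ContinuousLinearMap.id ℝ E
  | n + 1, ω => (cocycle θ A n (θ ω)).comp (A ω)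

section Domination

variable {V : Type*} [NormedAddCommGroup V] [NormedSpace ℝ V]

/-- Cross-multiplied form of `c * (‖T u‖ / ‖u‖) ≤ ‖T v‖ / ‖v‖`, which needs no case
distinction at zero vectors. -/
def Dominates (T : V →L[ℝ] V) (E F : Submodule ℝ V) (c : ℝ) : Prop :=
  ∀ v ∈ E, ∀ u ∈ F, c * ‖T u‖ * ‖v‖ ≤ ‖T v‖ * ‖u‖

theorem dominates_iff {T : V →L[ℝ] V} {E F : Submodule ℝ V} {c : ℝ} :
    Dominates T E F c ↔
      ∀ v ∈ E, v ≠ 0 → ∀ u ∈ F, u ≠ 0 → c * (‖T u‖ / ‖u‖) ≤ ‖T v‖ / ‖v‖ := by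
  refine ⟨fun h v hv hv0 u hu hu0 => ?_, fun h v hv u hu => ?_⟩
  · rw [← mul_div_assoc, div_le_div_iff₀ (norm_pos_iff.2 hu0) (norm_pos_iff.2 hv0)]
    exact h v hv u hu
  · rcases eq_or_ne v 0 with rfl | hv0
    · simp
    rcases eq_or_ne u 0 with rfl | hu0
    · simp
    have := h v hv hv0 u hu hu0
    rwa [← mul_div_assoc, div_le_div_iff₀ (norm_pos_iff.2 hu0) (norm_pos_iff.2 hv0)] at this

theorem dominates_id (E F : Submodule ℝ V) : Dominates (ContinuousLinearMap.id ℝ V) E F 1 :=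
  fun v _ u _ => by simp [mul_comm]

theorem Dominates.mono {T : V →L[ℝ] V} {E F : Submodule ℝ V} {c c' : ℝ}
    (h : Dominates T E F c) (hc : c' ≤ c) : Dominates T E F c' :=
  fun v hv u hu => le_trans (by gcongr) (h v hv u hu)

theorem dominates_div_of_le_norm {T : V →L[ℝ] V} {E : Submodule ℝ V} (F : Submodule ℝ V)
    {a b : ℝ} (ha : 0 ≤ a) (hb : 0 < b) (hE : ∀ v ∈ E, a * ‖v‖ ≤ ‖T v‖) (hT : ‖T‖ ≤ b) :
    Dominates T E F (a / b) := fun v hv u _ =>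
  calc a / b * ‖T u‖ * ‖v‖ ≤ a / b * (b * ‖u‖) * ‖v‖ := by
        gcongr
        exact T.le_of_opNorm_le hT u
    _ = a * ‖v‖ * ‖u‖ := by field_simp
    _ ≤ ‖T v‖ * ‖u‖ := by gcongr; exact hE v hv

theorem Dominates.comp {S T : V →L[ℝ] V} {E F E' F' : Submodule ℝ V} {c c' : ℝ}
    (hS : Dominates S E' F' c') (hT : Dominates T E F c) (hc' : 0 ≤ c')
    (hE : ∀ v ∈ E, T v ∈ E') (hF : ∀ u ∈ F, T u ∈ F') :
    Dominates (S.comp T) E F (c' * c) := by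
  intro v hv u hu
  simp only [ContinuousLinearMap.comp_apply]
  rcases (norm_nonneg (T u)).eq_or_lt with hTu | hTu
  · rw [norm_eq_zero.1 hTu.symm, map_zero, norm_zero]
    simp only [mul_zero, zero_mul]
    positivity
  -- Cancel `‖T u‖` after chaining the two cross-multiplied inequalities through it.
  refine le_of_mul_le_mul_right ?_ hTu
  calc c' * c * ‖S (T u)‖ * ‖v‖ * ‖T u‖ = c' * ‖S (T u)‖ * (c * ‖T u‖ * ‖v‖) := by ring
    _ ≤ c' * ‖S (T u)‖ * (‖T v‖ * ‖u‖) :=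
        mul_le_mul_of_nonneg_left (hT v hv u hu) (by positivity)
    _ = c' * ‖S (T u)‖ * ‖T v‖ * ‖u‖ := by ring
    _ ≤ ‖S (T v)‖ * ‖T u‖ * ‖u‖ :=
        mul_le_mul_of_nonneg_right (hS _ (hE v hv) _ (hF u hu)) (norm_nonneg u)
    _ = ‖S (T v)‖ * ‖u‖ * ‖T u‖ := by ring

end Domination

theorem pow_div_mul_exp_le {c ρ : ℝ} (hc₀ : 0 ≤ c) (hc₁ : c ≤ 1) (hρ : 1 < ρ) {N r q : ℕ}
    (hr : r < N) : c ^ N / ρ * Real.exp (Real.log ρ / N * ↑(r + N * q)) ≤ c ^ r * ρ ^ q := by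
  have hρ₀ : 0 < ρ := by linarith
  have hN : (0 : ℝ) < N := Nat.cast_pos.2 (Nat.zero_lt_of_lt hr)
  have hexponent : Real.log ρ / N * ↑(r + N * q) ≤ ↑(q + 1) * Real.log ρ := by
    have hlog := Real.log_pos hρ
    have hrN : (r : ℝ) ≤ N := by exact_mod_cast hr.le
    rw [div_mul_eq_mul_div, div_le_iff₀ hN]
    push_cast
    nlinarith
  have hexp : Real.exp (Real.log ρ / N * ↑(r + N * q)) ≤ ρ ^ (q + 1) :=
    calc _ ≤ Real.exp (↑(q + 1) * Real.log ρ) := Real.exp_le_exp.2 hexponent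
      _ = ρ ^ (q + 1) := by rw [Real.exp_nat_mul, Real.exp_log hρ₀]
  calc c ^ N / ρ * Real.exp (Real.log ρ / N * ↑(r + N * q)) ≤ c ^ r / ρ * ρ ^ (q + 1) := by
        gcongr ?_ / ρ * ?_
        exact pow_le_pow_of_le_one hc₀ hc₁ hr.le
    _ = c ^ r * ρ ^ q := by field_simp; ring

theorem cocycle_add {V : Type*} [NormedAddCommGroup V] [NormedSpace ℝ V] (θ : Ω → Ω)
    (A : Ω → V →L[ℝ] V) (m k : ℕ) (ω : Ω) :
    cocycle θ A (m + k) ω = (cocycle θ A m (θ^[k] ω)).comp (cocycle θ A k ω) := by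
  induction k generalizing ω with
  | zero => rfl
  | succ k ih =>
    show (cocycle θ A (m + k) (θ ω)).comp (A ω) = _
    rw [ih (θ ω), Function.iterate_succ_apply]
    rfl

section Cocycle

variable {V : Type*} [NormedAddCommGroup V] [NormedSpace ℝ V] {θ : Ω → Ω}
  {A : Ω → V →L[ℝ] V} {G : Set Ω} (hG : Set.MapsTo θ G G) {E F : Ω → Submodule ℝ V}

include hG

theorem cocycle_mem (hE : ∀ ω ∈ G, ∀ v ∈ E ω, A ω v ∈ E (θ ω)) (n : ℕ) {ω : Ω} (hω : ω ∈ G)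
    {v : V} (hv : v ∈ E ω) : cocycle θ A n ω v ∈ E (θ^[n] ω) := by
  induction n generalizing ω v with
  | zero => exact hv
  | succ n ih => exact ih (hG hω) (hE ω hω v hv)

theorem pow_mul_norm_le_norm_cocycle {δ : ℝ} (hδ : 0 ≤ δ)
    (hE : ∀ ω ∈ G, ∀ v ∈ E ω, A ω v ∈ E (θ ω)) (hlow : ∀ ω ∈ G, ∀ v ∈ E ω, δ * ‖v‖ ≤ ‖A ω v‖)
    (n : ℕ) {ω : Ω} (hω : ω ∈ G) {v : V} (hv : v ∈ E ω) :
    δ ^ n * ‖v‖ ≤ ‖cocycle θ A n ω v‖ := by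
  induction n generalizing ω v with
  | zero => simp [cocycle]
  | succ n ih =>
    calc δ ^ (n + 1) * ‖v‖ = δ ^ n * (δ * ‖v‖) := by ring
      _ ≤ δ ^ n * ‖A ω v‖ := by gcongr; exact hlow ω hω v hv
      _ ≤ ‖cocycle θ A n (θ ω) (A ω v)‖ := ih (hG hω) (hE ω hω v hv)

theorem norm_cocycle_le {M : ℝ} (hA : ∀ ω ∈ G, ‖A ω‖ ≤ M) (n : ℕ) {ω : Ω} (hω : ω ∈ G) :
    ‖cocycle θ A n ω‖ ≤ M ^ n := by
  induction n generalizing ω with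
  | zero => exact ContinuousLinearMap.norm_id_le
  | succ n ih =>
    have hM : 0 ≤ M := (norm_nonneg _).trans (hA ω hω)
    calc ‖(cocycle θ A n (θ ω)).comp (A ω)‖ ≤ ‖cocycle θ A n (θ ω)‖ * ‖A ω‖ :=
          ContinuousLinearMap.opNorm_comp_le _ _
      _ ≤ M ^ n * M := by gcongr; exacts [ih (hG hω), hA ω hω]
      _ = M ^ (n + 1) := (pow_succ M n).symm

theorem Dominates.cocycle_add (hE : ∀ ω ∈ G, ∀ v ∈ E ω, A ω v ∈ E (θ ω))
    (hF : ∀ ω ∈ G, ∀ u ∈ F ω, A ω u ∈ F (θ ω)) {m k : ℕ} {ω : Ω} (hω : ω ∈ G) {c c' : ℝ}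
    (hk : Dominates (cocycle θ A k ω) (E ω) (F ω) c)
    (hm : Dominates (cocycle θ A m (θ^[k] ω)) (E (θ^[k] ω)) (F (θ^[k] ω)) c') (hc' : 0 ≤ c') :
    Dominates (cocycle θ A (m + k) ω) (E ω) (F ω) (c' * c) := by
  rw [_root_.cocycle_add]
  exact hm.comp hk hc' (fun v => cocycle_mem hG hE k hω) (fun u => cocycle_mem hG hF k hω)

theorem dominates_cocycle_mul {N : ℕ} {ρ : ℝ} (hρ : 0 ≤ ρ)
    (hE : ∀ ω ∈ G, ∀ v ∈ E ω, A ω v ∈ E (θ ω)) (hF : ∀ ω ∈ G, ∀ u ∈ F ω, A ω u ∈ F (θ ω))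
    (hdom : ∀ ω ∈ G, Dominates (cocycle θ A N ω) (E ω) (F ω) ρ) (q : ℕ) {ω : Ω}
    (hω : ω ∈ G) : Dominates (cocycle θ A (N * q) ω) (E ω) (F ω) (ρ ^ q) := by
  induction q with
  | zero => exact dominates_id _ _
  | succ q ih =>
    rw [Nat.mul_succ, Nat.add_comm, pow_succ']
    exact ih.cocycle_add hG hE hF hω (hdom _ (hG.iterate _ hω)) hρ

theorem dominates_cocycle_exp {δ M ρ : ℝ} {N : ℕ} (hδ : 0 < δ) (hδM : δ ≤ M) (hρ : 1 < ρ)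
    (hN : 0 < N) (hE : ∀ ω ∈ G, ∀ v ∈ E ω, A ω v ∈ E (θ ω))
    (hF : ∀ ω ∈ G, ∀ u ∈ F ω, A ω u ∈ F (θ ω))
    (hlow : ∀ ω ∈ G, ∀ v ∈ E ω, δ * ‖v‖ ≤ ‖A ω v‖) (hA : ∀ ω ∈ G, ‖A ω‖ ≤ M)
    (hdom : ∀ ω ∈ G, Dominates (cocycle θ A N ω) (E ω) (F ω) ρ) {ω : Ω} (hω : ω ∈ G) (n : ℕ) :
    Dominates (cocycle θ A n ω) (E ω) (F ω)
      ((δ / M) ^ N / ρ * Real.exp (Real.log ρ / N * n)) := by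
  obtain ⟨q, r, hr, rfl⟩ : ∃ q r, r < N ∧ n = r + N * q :=
    ⟨n / N, n % N, Nat.mod_lt n hN, (Nat.mod_add_div n N).symm⟩
  have hM : 0 < M := hδ.trans_le hδM
  have hωq : θ^[N * q] ω ∈ G := hG.iterate _ hω
  have hblocks := dominates_cocycle_mul hG (by positivity) hE hF hdom q hω
  have hrest : Dominates (cocycle θ A r (θ^[N * q] ω)) (E (θ^[N * q] ω)) (F (θ^[N * q] ω))
      ((δ / M) ^ r) := by
    rw [div_pow]
    exact dominates_div_of_le_norm _ (by positivity) (by positivity)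
      (fun v => pow_mul_norm_le_norm_cocycle hG hδ.le hE hlow r hωq) (norm_cocycle_le hG hA r hωq)
  refine (hblocks.cocycle_add hG hE hF hω hrest (by positivity)).mono ?_
  exact pow_div_mul_exp_le (by positivity) ((div_le_one hM).2 hδM) hρ hr

end Cocycle

theorem MeasureTheory.MeasurePreserving.ae_forall_iterate {α : Type*} [MeasurableSpace α]
    {μ : Measure α} {f : α → α} (hf : MeasurePreserving f μ μ) {p : α → Prop}
    (hp : ∀ᵐ x ∂μ, p x) : ∀ᵐ x ∂μ, ∀ k, p (f^[k] x) :=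
  ae_all_iff.2 fun k => (hf.iterate k).quasiMeasurePreserving.ae hp

theorem dominated_splitting_single_time_characterization_general
    [MeasurableSpace Ω] (μ : Measure Ω)
    (θ : Ω ≃ᵐ Ω) (hθ : MeasurePreserving (⇑θ) μ μ)
    (d : ℕ)
    (A : Ω → EuclideanSpace ℝ (Fin d) →L[ℝ] EuclideanSpace ℝ (Fin d))
    (M : ℝ) (hM : ∀ᵐ ω ∂μ, ‖A ω‖ ≤ M)
    (E F : Ω → Submodule ℝ (EuclideanSpace ℝ (Fin d)))
    (δ : ℝ) (hδ : 0 < δ)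
    (hInv : ∀ᵐ ω ∂μ, (∀ v ∈ E ω, A ω v ∈ E (θ ω)) ∧ (∀ u ∈ F ω, A ω u ∈ F (θ ω)) ∧
      (∀ v ∈ E ω, δ * ‖v‖ ≤ ‖A ω v‖)) :
    (∃ K : ℝ, 0 < K ∧ ∃ α : ℝ, 0 < α ∧ ∀ᵐ ω ∂μ, ∀ n : ℕ,
        ∀ v ∈ E ω, v ≠ 0 → ∀ u ∈ F ω, u ≠ 0 →
          K * Real.exp (α * n) * (‖cocycle (⇑θ) A n ω u‖ / ‖u‖) ≤
            ‖cocycle (⇑θ) A n ω v‖ / ‖v‖) ↔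
    (∃ N : ℕ, 1 ≤ N ∧ ∃ ρ : ℝ, 1 < ρ ∧ ∀ᵐ ω ∂μ,
        ∀ v ∈ E ω, v ≠ 0 → ∀ u ∈ F ω, u ≠ 0 →
          ρ * (‖cocycle (⇑θ) A N ω u‖ / ‖u‖) ≤ ‖cocycle (⇑θ) A N ω v‖ / ‖v‖) := by
  simp only [← dominates_iff]
  constructor
  · rintro ⟨K, hK, α, hα, hdom⟩
    have hgrowth : Tendsto (fun n : ℕ => K * Real.exp (α * n)) atTop atTop :=
      (Real.tendsto_exp_atTop.comp
        (tendsto_natCast_atTop_atTop.const_mul_atTop hα)).const_mul_atTop hK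
    obtain ⟨N, hN2, hN1⟩ := ((hgrowth.eventually_ge_atTop 2).and (eventually_ge_atTop 1)).exists
    exact ⟨N, hN1, 2, one_lt_two, hdom.mono fun ω hω => (hω N).mono hN2⟩
  · rintro ⟨N, hN, ρ, hρ, hdom⟩
    -- The bound `max M δ` rather than `M` guarantees `δ / max M δ ≤ 1`.
    let P : Ω → Prop := fun ω => ((∀ v ∈ E ω, A ω v ∈ E (θ ω)) ∧ (∀ u ∈ F ω, A ω u ∈ F (θ ω)) ∧
      (∀ v ∈ E ω, δ * ‖v‖ ≤ ‖A ω v‖)) ∧ ‖A ω‖ ≤ max M δ ∧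
      Dominates (cocycle θ A N ω) (E ω) (F ω) ρ
    let G : Set Ω := {ω | ∀ k, P (θ^[k] ω)}
    have hG : Set.MapsTo θ G G := fun ω hω k => by
      simpa only [Function.iterate_succ_apply] using hω (k + 1)
    have hP : ∀ ω ∈ G, P ω := fun ω hω => hω 0
    have hGae : ∀ᵐ ω ∂μ, ω ∈ G := hθ.ae_forall_iterate <| by
      filter_upwards [hInv, hM, hdom] with ω h₁ h₂ h₃
      exact ⟨h₁, h₂.trans (le_max_left M δ), h₃⟩
    refine ⟨_, by positivity, _, div_pos (Real.log_pos hρ) (by positivity), hGae.mono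
      fun ω hω n => dominates_cocycle_exp hG hδ (le_max_right M δ) hρ hN
        (fun ω h => (hP ω h).1.1) (fun ω h => (hP ω h).1.2.1) (fun ω h => (hP ω h).1.2.2)
        (fun ω h => (hP ω h).2.1) (fun ω h => (hP ω h).2.2) hω n⟩

/-- Remark 5.5(i): for a bounded linear random dynamical system on `ℝ^d` with an invariant
measurable splitting `E(ω) ⊕ F(ω)` and a uniform lower bound `δ` along `E`, exponential
domination over all times is equivalent to single-time domination with a factor `ρ > 1`. -/
theorem dominated_splitting_single_time_characterization
    [MeasurableSpace Ω] (μ : Measure Ω) [IsProbabilityMeasure μ]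
    (θ : Ω ≃ᵐ Ω) (hθ : MeasurePreserving (⇑θ) μ μ)
    (d : ℕ) (hd : 1 ≤ d)
    (A : Ω → EuclideanSpace ℝ (Fin d) →L[ℝ] EuclideanSpace ℝ (Fin d))
    (hAmeas : ∀ x : EuclideanSpace ℝ (Fin d), Measurable fun ω => A ω x)
    (M : ℝ) (hM : ∀ᵐ ω ∂μ, ‖A ω‖ ≤ M)
    (E F : Ω → Submodule ℝ (EuclideanSpace ℝ (Fin d)))
    (δ : ℝ) (hδ : 0 < δ)
    (hInv : ∀ᵐ ω ∂μ, (∀ v ∈ E ω, A ω v ∈ E (θ ω)) ∧ (∀ u ∈ F ω, A ω u ∈ F (θ ω)) ∧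
      (∀ v ∈ E ω, δ * ‖v‖ ≤ ‖A ω v‖)) :
    (∃ K : ℝ, 0 < K ∧ ∃ α : ℝ, 0 < α ∧ ∀ᵐ ω ∂μ, ∀ n : ℕ,
        ∀ v ∈ E ω, v ≠ 0 → ∀ u ∈ F ω, u ≠ 0 →
          K * Real.exp (α * n) * (‖cocycle (⇑θ) A n ω u‖ / ‖u‖) ≤
            ‖cocycle (⇑θ) A n ω v‖ / ‖v‖) ↔
    (∃ N : ℕ, 1 ≤ N ∧ ∃ ρ : ℝ, 1 < ρ ∧ ∀ᵐ ω ∂μ,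
        ∀ v ∈ E ω, v ≠ 0 → ∀ u ∈ F ω, u ≠ 0 →
          ρ * (‖cocycle (⇑θ) A N ω u‖ / ‖u‖) ≤ ‖cocycle (⇑θ) A N ω v‖ / ‖v‖) :=
  dominated_splitting_single_time_characterization_general μ θ hθ d A M hM E F δ hδ hInv
end
end
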